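/- arXiv:2604.10779 — 2 statements merged into one kernel-verified Lean document; each statement's English description precedes it below -/
import Mathlib

section
/- Let π be a permutation of length n ≥ 1 and let k ≥ 0. Then s^k(π[:n]) occurs as a (not necessarily contiguous) subsequence of s^k(π), where π[:n] denotes the sequence of the first n−1 entries of π. -/
noncomputable section
theorem foldrMaxMem (x : ℕ) (xs : List ℕ) : (x :: xs).foldr max 0 ∈ x :: xs := by
  induction xs generalizing x with
  | nil => simp
  | cons y ys ih =>
    rcases max_choice x ((y :: ys).foldr max 0) with h | h
    · simp only [List.foldr_cons] at h ⊢
      rw [h]; exact List.mem_cons_self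
    · simp only [List.foldr_cons] at h ⊢
      rw [h]; exact List.mem_cons_of_mem _ (ih y)
theorem takeWhileLt (l : List ℕ) (m : ℕ) (hm : m ∈ l) :
    (l.takeWhile (fun y => y ≠ m)).length < l.length := by
  have hd : l.dropWhile (fun y => y ≠ m) ≠ [] := by
    intro h; rw [List.dropWhile_eq_nil_iff] at h; simpa using h m hm
  have h1 : (l.takeWhile (fun y => y ≠ m)).length
      + (l.dropWhile (fun y => y ≠ m)).length = l.length := by
    rw [← List.length_append, List.takeWhile_append_dropWhile]
  have h2 : 0 < (l.dropWhile (fun y => y ≠ m)).length := List.length_pos_iff.mpr hd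
  omega
theorem dropWhileDropLt (l : List ℕ) (m : ℕ) (hl : l ≠ []) :
    ((l.dropWhile (fun y => y ≠ m)).drop 1).length < l.length := by
  have h1 : (l.takeWhile (fun y => y ≠ m)).length
      + (l.dropWhile (fun y => y ≠ m)).length = l.length := by
    rw [← List.length_append, List.takeWhile_append_dropWhile]
  have h2 : 0 < l.length := List.length_pos_iff.mpr hl
  rw [List.length_drop]; omega

/-- West's stack-sorting map `s`: `s([]) = []`, `s(L m R) = s(L) s(R) m` for `m` the maximum. -/
def ss : List ℕ → List ℕ
  | [] => []
  | x :: xs =>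
    ss ((x :: xs).takeWhile (fun y => y ≠ (x :: xs).foldr max 0)) ++
    ss (((x :: xs).dropWhile (fun y => y ≠ (x :: xs).foldr max 0)).drop 1) ++
    [(x :: xs).foldr max 0]
termination_by l => l.length
decreasing_by
  · exact takeWhileLt _ _ (foldrMaxMem _ _)
  · exact dropWhileDropLt _ _ (by simp)

/-- `met π` : the least `k ≥ 0` with `s^k(π)` increasing. -/
def met (l : List ℕ) : ℕ := sInf {k | List.Pairwise (· < ·) (ss^[k] l)}

/-- Right-to-left maxima of a list, read from left to right.  For the prefix of `s^{i-1}(π)`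
before `0` this is exactly the column sequence `C_{π,i}`. -/
def rtlMax : List ℕ → List ℕ
  | [] => []
  | x :: xs => if ∀ y ∈ xs, y < x then x :: rtlMax xs else rtlMax xs

/-- The blocks `b_{π,i,j}`: the segments strictly between consecutive right-to-left maxima. -/
def blocksOf : List ℕ → List (List ℕ)
  | [] => []
  | x :: xs =>
    if ∀ y ∈ xs, y < x then [] :: blocksOf xs
    else
      match blocksOf xs with
      | [] => [[x]]
      | b :: bs => (x :: b) :: bs

/-- The part of `s^{i-1}(π)` strictly before the entry `0`. -/
def prefixAt (π : List ℕ) (i : ℕ) : List ℕ := (ss^[i-1] π).takeWhile (fun x => x ≠ 0)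

/-- The column sequence `C_{π,i}`. -/
def colSeqAt (π : List ℕ) (i : ℕ) : List ℕ := rtlMax (prefixAt π i)

/-- The block sequence `B_{π,i}`. -/
def blocksAt (π : List ℕ) (i : ℕ) : List (List ℕ) := blocksOf (prefixAt π i)

/-- `col_π(v)`: the unique `i` with `v ∈ C_{π,i}` (as the least such `i ≥ 1`). -/
def colOf (π : List ℕ) (v : ℕ) : ℕ := sInf {i | 1 ≤ i ∧ v ∈ colSeqAt π i}

/-- `colpos_π(v)`: the (1-indexed) position of `v` in `C_{π,col_π(v)}`. -/
def colposOf (π : List ℕ) (v : ℕ) : ℕ := (colSeqAt π (colOf π v)).idxOf v + 1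

/-- `leftof_π(v) = c_{π,col_π(v)-1,j}` for the unique `j` with `v = max(b_{π,col_π(v)-1,j})`. -/
def leftOf (π : List ℕ) (v : ℕ) : ℕ :=
  (colSeqAt π (colOf π v - 1)).getD
    (((blocksAt π (colOf π v - 1)).map (fun b => b.foldr max 0)).idxOf v) 0

/-- `row_π(v)`: follow `leftof` back to column 1 and take `colpos` there. -/
def rowOf (π : List ℕ) (v : ℕ) : ℕ := colposOf π ((leftOf π)^[colOf π v - 1] v)

/-- `upof_π(v) = c_{π,col_π(v),colpos_π(v)-1}`. -/
def upOf (π : List ℕ) (v : ℕ) : ℕ := (colSeqAt π (colOf π v)).getD (colposOf π v - 2) 0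

/-- The stack-sorting tableau `T_π(v) = (col_π(v), row_π(v))`. -/
def Tmap (π : List ℕ) (v : ℕ) : ℕ × ℕ := (colOf π v, rowOf π v)

/-- The composition `α_π = (|{v ∈ [n] : row_π(v) = j}|)_{j=1}^{|C_{π,1}|}` (here `n = |π| - 1`). -/
def alphaOf (π : List ℕ) : List ℕ :=
  (List.range' 1 (colSeqAt π 1).length).map
    (fun j => ((Finset.Icc 1 (π.length - 1)).filter (fun v => rowOf π v = j)).card)

/-- Membership in the composition diagram `D(α) = {(i,j) : 1 ≤ j ≤ ℓ(α), 1 ≤ i ≤ α_j}`. -/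
def inDiagram (α : List ℕ) (p : ℕ × ℕ) : Prop :=
  1 ≤ p.1 ∧ 1 ≤ p.2 ∧ p.2 ≤ α.length ∧ p.1 ≤ α.getD (p.2 - 1) 0

instance inDiagramDec (α : List ℕ) : DecidablePred (inDiagram α) := fun p => by
  unfold inDiagram; infer_instance

/-- `D(α)` as a finite set. -/
def diagramFinset (α : List ℕ) : Finset (ℕ × ℕ) :=
  (Finset.range (α.foldr max 0 + 1) ×ˢ Finset.range (α.length + 1)).filter
    (fun p => inDiagram α p)

/-- `colpos_α(i,j) = |{(i,j') ∈ D(α) : j' < j} ∪ {(i,0)}|`. -/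
def colposA (α : List ℕ) (p : ℕ × ℕ) : ℕ :=
  (((Finset.range p.2).filter (fun j' => inDiagram α (p.1, j'))) ∪ {0}).card

/-- `leftof_α(i,j) = (i-1,j)`. -/
def leftA (p : ℕ × ℕ) : ℕ × ℕ := (p.1 - 1, p.2)

/-- `upof_α(i,j) = (i, max({j' < j : (i,j') ∈ D(α)} ∪ {0}))`. -/
def upA (α : List ℕ) (p : ℕ × ℕ) : ℕ × ℕ :=
  (p.1, (((Finset.range p.2).filter (fun j' => inDiagram α (p.1, j'))) ∪ {0}).sup id)

/-- The hook length `h_α(i,j)`. -/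
def hook (α : List ℕ) (p : ℕ × ℕ) : ℕ :=
  if 1 < p.1 then
    ((diagramFinset α).filter (fun q =>
      q.1 ≤ p.1 - 1 ∧ (upA α (p.1 - 1, p.2)).2 < q.2 ∧ q.2 ≤ p.2)).card
  else 1

/-- The segment `B_{π,T}(i,j,k)` of `s^{k-1}(π)`, where `U = T⁻¹`. -/
def Bseg (π : List ℕ) (α : List ℕ) (U : ℕ × ℕ → ℕ) (i j k : ℕ) : List ℕ :=
  if (upA α (leftA (i, j))).2 > 0 then
    ((ss^[k-1] π).take ((ss^[k-1] π).idxOf (U (k, j)) + 1)).drop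
      ((ss^[k-1] π).idxOf (U (k, (upA α (leftA (i, j))).2)) + 1)
  else
    (ss^[k-1] π).take ((ss^[k-1] π).idxOf (U (k, j)) + 1)

/-- The inverse `T_π⁻¹` of the stack-sorting tableau. -/
def invTmap (π : List ℕ) : ℕ × ℕ → ℕ :=
  Function.invFunOn (Tmap π) (Set.Icc 1 (π.length - 1))

/-- A linear extension of `D(α)`, encoded as the list `[T(1), …, T(n)]`:
`T` is a bijection `{1,…,n} → D(α)` with `T(a) ≥_D T(b) → a ≥ b`. -/
def isLinExt (α : List ℕ) (ℓ : List (ℕ × ℕ)) : Prop :=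
  ℓ.Nodup ∧ (∀ p, p ∈ ℓ ↔ inDiagram α p) ∧
  ∀ a b, a < ℓ.length → b < ℓ.length →
    (ℓ.getD a (0, 0)).1 ≤ (ℓ.getD b (0, 0)).1 ∧ (ℓ.getD a (0, 0)).2 ≤ (ℓ.getD b (0, 0)).2 →
    b ≤ a
end

/-! If an entry `x` of a permutation is smaller than every entry to its right, then deleting `x`
commutes with stack-sorting, and `x` is again smaller than every entry to its right in `s(π)`:
writing `π = L m R` with `m` the maximum, `x` lies inside `L` or inside `R` (or is `m` itself, in
which case it is the last entry), and `s(π) = s(L) s(R) m` treats `L` and `R` separately.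
The last entry of `π` is such an `x`, so `s^k(π[:n])` is `s^k(π)` with `π_n` deleted. -/

theorem List.takeWhile_ne_append_cons_drop_dropWhile {α : Type*} [DecidableEq α] {m : α}
    {l : List α} (hm : m ∈ l) :
    l.takeWhile (fun y => y ≠ m) ++ m :: (l.dropWhile (fun y => y ≠ m)).drop 1 = l := by
  induction l with
  | nil => simp at hm
  | cons a l ih =>
    by_cases ha : a = m
    · simp [ha]
    · have hp : decide (a ≠ m) = true := decide_eq_true ha
      rw [List.takeWhile_cons_of_pos (p := fun y => decide (y ≠ m)) hp,
        List.dropWhile_cons_of_pos (p := fun y => decide (y ≠ m)) hp, List.cons_append,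
        ih ((List.mem_cons.mp hm).resolve_left (Ne.symm ha))]

theorem ss_perm (l : List ℕ) : (ss l).Perm l := by
  fun_induction ss l with
  | case1 => rfl
  | case2 x xs ih₁ ih₂ =>
    refine ((ih₁.append ih₂).append_right _).trans ?_
    refine (List.perm_append_singleton _ _).trans (List.perm_middle.symm.trans ?_)
    rw [List.takeWhile_ne_append_cons_drop_dropWhile (foldrMaxMem x xs)]

theorem foldr_max_mem {l : List ℕ} (hl : l ≠ []) : l.foldr max 0 ∈ l := by
  obtain ⟨x, xs, rfl⟩ := List.exists_cons_of_ne_nil hl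
  exact foldrMaxMem x xs

theorem ss_append_cons {L R : List ℕ} {m : ℕ} (hmL : m ∉ L)
    (hle : ∀ y ∈ L ++ m :: R, y ≤ m) : ss (L ++ m :: R) = ss L ++ ss R ++ [m] := by
  have hmax : (L ++ m :: R).foldr max 0 = m :=
    le_antisymm (List.max_le_of_forall_le _ _ hle) (List.le_max_of_le' 0 (by simp) le_rfl)
  have hL : ∀ y ∈ L, decide (y ≠ m) = true :=
    fun y hy => decide_eq_true (ne_of_mem_of_not_mem hy hmL)
  obtain ⟨y, ys, hys⟩ :=
    List.exists_cons_of_ne_nil (List.append_ne_nil_of_right_ne_nil L (List.cons_ne_nil m R))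
  rw [hys, ss, ← hys, hmax, List.takeWhile_append_of_pos hL, List.dropWhile_append_of_pos hL]
  simp

def IsRLMinDeletion {α : Type*} [LT α] (x : α) (l l' : List α) : Prop :=
  ∃ A B, l = A ++ x :: B ∧ l' = A ++ B ∧ ∀ b ∈ B, x < b

namespace IsRLMinDeletion

variable {α : Type*} [LT α] {x : α} {l l' : List α}

theorem sublist (h : IsRLMinDeletion x l l') : l'.Sublist l := by
  obtain ⟨A, B, rfl, rfl, -⟩ := h
  exact (List.sublist_cons_self x B).append_left A

theorem append_left (C : List α) (h : IsRLMinDeletion x l l') :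
    IsRLMinDeletion x (C ++ l) (C ++ l') := by
  obtain ⟨A, B, rfl, rfl, hB⟩ := h
  exact ⟨C ++ A, B, by simp, by simp, hB⟩

theorem append_right {E : List α} (h : IsRLMinDeletion x l l') (hE : ∀ e ∈ E, x < e) :
    IsRLMinDeletion x (l ++ E) (l' ++ E) := by
  obtain ⟨A, B, rfl, rfl, hB⟩ := h
  refine ⟨A, B ++ E, by simp, by simp, fun b hb => ?_⟩
  rcases List.mem_append.mp hb with hb | hb
  exacts [hB b hb, hE b hb]

end IsRLMinDeletion

theorem isRLMinDeletion_dropLast {α : Type*} [LT α] {l : List α} (hl : l ≠ []) :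
    IsRLMinDeletion (l.getLast hl) l l.dropLast :=
  ⟨l.dropLast, [], (List.dropLast_append_getLast hl).symm, by simp, by simp⟩

theorem isRLMinDeletion_ss {x : ℕ} {l l' : List ℕ} (hnd : l.Nodup)
    (h : IsRLMinDeletion x l l') : IsRLMinDeletion x (ss l) (ss l') := by
  have hl' := h.sublist
  obtain ⟨A, B, rfl, rfl, hB⟩ := h
  obtain ⟨m, hml, hle⟩ : ∃ m ∈ A ++ x :: B, ∀ y ∈ A ++ x :: B, y ≤ m :=
    ⟨_, foldr_max_mem (by simp), fun y hy => List.le_max_of_le' 0 hy le_rfl⟩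
  have hsplit : ∀ {k : List ℕ} (L R : List ℕ), k.Sublist (A ++ x :: B) → k = L ++ m :: R →
      ss k = ss L ++ ss R ++ [m] := by
    rintro k L R hk rfl
    have hmL : m ∉ L := fun hm =>
      (List.nodup_cons.mp (List.nodup_middle.mp (hk.nodup hnd))).1 (List.mem_append_left R hm)
    exact ss_append_cons hmL fun y hy => hle y (hk.subset hy)
  simp only [List.mem_append, List.mem_cons] at hml
  rcases hml with hmA | rfl | hmB
  · have hxm' : x < m :=
      (hle x (by simp)).lt_of_ne fun hx => List.disjoint_of_nodup_append hnd hmA (by simp [hx])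
    obtain ⟨A₁, A₂, rfl⟩ := List.append_of_mem hmA
    have hnd' : (A₂ ++ x :: B).Nodup := hnd.sublist (by simp)
    rw [hsplit A₁ (A₂ ++ x :: B) (.refl _) (by simp), hsplit A₁ (A₂ ++ B) hl' (by simp)]
    exact ((isRLMinDeletion_ss hnd' ⟨A₂, B, rfl, rfl, hB⟩).append_left _).append_right
      (by simpa)
  · have hB : B = [] :=
      List.eq_nil_iff_forall_not_mem.mpr fun b hb => (hB b hb).not_ge (hle b (by simp [hb]))
    subst hB
    rw [hsplit A [] (.refl _) rfl]
    exact ⟨ss A, [], by simp [ss.eq_1], by simp, by simp⟩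
  · have hxm' : x < m := hB m hmB
    obtain ⟨B₁, B₂, rfl⟩ := List.append_of_mem hmB
    have hnd' : (A ++ x :: B₁).Nodup := hnd.sublist (by simp)
    rw [hsplit (A ++ x :: B₁) B₂ (.refl _) (by simp), hsplit (A ++ B₁) B₂ hl' (by simp)]
    have hB₁ : ∀ b ∈ B₁, x < b := fun b hb => hB b (by simp [hb])
    have hB₂ : ∀ e ∈ ss B₂, x < e := fun e he => hB e (by simp [(ss_perm B₂).subset he])
    exact ((isRLMinDeletion_ss hnd' ⟨A, B₁, rfl, rfl, hB₁⟩).append_right hB₂).append_right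
      (by simpa)
termination_by l.length

theorem nodup_iterate_ss {l : List ℕ} (hnd : l.Nodup) (k : ℕ) : (ss^[k] l).Nodup := by
  induction k with
  | zero => exact hnd
  | succ k ih => rw [Function.iterate_succ_apply']; exact (ss_perm _).nodup_iff.mpr ih

theorem isRLMinDeletion_iterate_ss {x : ℕ} {l l' : List ℕ} (hnd : l.Nodup)
    (h : IsRLMinDeletion x l l') (k : ℕ) : IsRLMinDeletion x (ss^[k] l) (ss^[k] l') := by
  induction k with
  | zero => exact h
  | succ k ih =>
    rw [Function.iterate_succ_apply', Function.iterate_succ_apply']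
    exact isRLMinDeletion_ss (nodup_iterate_ss hnd k) ih

theorem stmt_3_general (π : List ℕ) (hnd : π.Nodup)
    (k : ℕ) :
    (ss^[k] π.dropLast).Sublist (ss^[k] π) := by
  rcases eq_or_ne π [] with rfl | hπ
  · exact .refl _
  · exact (isRLMinDeletion_iterate_ss hnd (isRLMinDeletion_dropLast hπ) k).sublist

/-- Lemma 5.2: `s^k(π[:n])` occurs as a subsequence of `s^k(π)`. -/
theorem stmt_3 (n : ℕ) (hn : 1 ≤ n) (π : List ℕ) (hlen : π.length = n) (hnd : π.Nodup)
    (k : ℕ) :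
    (ss^[k] π.dropLast).Sublist (ss^[k] π) :=
  stmt_3_general π hnd k
end

section
/- Let π ∈ S_n, let 1 ≤ m ≤ n, and let k ≥ 0. Then s^k(π_{≥m}) occurs as a (not necessarily contiguous) subsequence of s^k(π), where π_{≥m} denotes the subsequence of entries of π greater than or equal to m. -/
/-!
Deleting every entry below a threshold `m` commutes with `s`: if `π = L M R` with `M` its maximum,
either `M < m` and everything is deleted, or `M ≥ m` is still the maximum of
`π_{≥m} = L_{≥m} M R_{≥m}`, and induction applies to `L` and `R`. Hence
`s^k(π_{≥m}) = (s^k π)_{≥m}`, which is a subsequence of `s^k π`.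
-/

lemma exists_eq_append_cons_max (l : List ℕ) (hl : l ≠ []) :
    ∃ L M R, l = L ++ M :: R ∧ (∀ x ∈ L, x < M) ∧ ∀ x ∈ R, x ≤ M := by
  induction l with
  | nil => exact absurd rfl hl
  | cons a l ih =>
    rcases eq_or_ne l [] with rfl | hne
    · exact ⟨[], a, [], rfl, by simp, by simp⟩
    obtain ⟨L, M, R, rfl, hL, hR⟩ := ih hne
    by_cases haM : a < M
    · refine ⟨a :: L, M, R, rfl, ?_, hR⟩
      simpa [haM] using hL
    · refine ⟨[], a, L ++ M :: R, rfl, by simp, ?_⟩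
      simp only [List.mem_append, List.mem_cons]
      rintro x (hx | rfl | hx)
      exacts [(hL x hx).le.trans (not_lt.1 haM), not_lt.1 haM, (hR x hx).trans (not_lt.1 haM)]

theorem induction_on_split_at_max {P : List ℕ → Prop} (nil : P [])
    (split : ∀ L M R, (∀ x ∈ L, x < M) → (∀ x ∈ R, x ≤ M) → P L → P R → P (L ++ M :: R))
    (l : List ℕ) : P l := by
  induction h : l.length using Nat.strong_induction_on generalizing l with
  | _ n ih =>
    rcases eq_or_ne l [] with rfl | hl
    · exact nil
    obtain ⟨L, M, R, rfl, hL, hR⟩ := exists_eq_append_cons_max l hl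
    subst h
    exact split L M R hL hR (ih _ (by simp only [List.length_append, List.length_cons]; omega) L rfl)
      (ih _ (by simp only [List.length_append, List.length_cons]; omega) R rfl)

lemma ss_nil : ss [] = [] := by
  rw [ss]

lemma ss_append_cons_s5 {L R : List ℕ} {M : ℕ} (hL : ∀ x ∈ L, x < M) (hR : ∀ x ∈ R, x ≤ M) :
    ss (L ++ M :: R) = ss L ++ ss R ++ [M] := by
  have hmax : (L ++ M :: R).foldr max 0 = M := by
    refine le_antisymm (List.max_le_of_forall_le _ _ ?_) (List.le_max_of_le (by simp) le_rfl)
    simp only [List.mem_append, List.mem_cons]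
    rintro x (hx | rfl | hx)
    exacts [(hL x hx).le, le_rfl, hR x hx]
  have hL_ne : ∀ x ∈ L, decide (x ≠ M) = true := fun x hx => by simpa using (hL x hx).ne
  have htake : (L ++ M :: R).takeWhile (fun y => y ≠ M) = L := by
    rw [List.takeWhile_append_of_pos hL_ne, List.takeWhile_cons_of_neg (by simp), List.append_nil]
  have hdrop : (L ++ M :: R).dropWhile (fun y => y ≠ M) = M :: R := by
    rw [List.dropWhile_append, if_pos (by simpa using hL_ne), List.dropWhile_cons_of_neg (by simp)]
  obtain ⟨x, xs, hx⟩ := List.exists_cons_of_ne_nil (List.append_ne_nil_of_right_ne_nil L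
    (List.cons_ne_nil M R))
  rw [hx, ss, ← hx, hmax, htake, hdrop, List.drop_one, List.tail_cons]

theorem ss_filter_le (m : ℕ) (l : List ℕ) :
    ss (l.filter (fun x => m ≤ x)) = (ss l).filter (fun x => m ≤ x) := by
  induction l using induction_on_split_at_max with
  | nil => simp [ss_nil]
  | split L M R hL hR ihL ihR =>
    simp only [ss_append_cons_s5 hL hR, List.filter_append, List.filter_cons, ← ihL, ← ihR]
    by_cases hmM : m ≤ M
    · simp only [hmM, decide_true, if_true]
      exact ss_append_cons_s5 (fun x hx => hL x (List.mem_of_mem_filter hx))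
        (fun x hx => hR x (List.mem_of_mem_filter hx))
    · have hLm : L.filter (fun x => m ≤ x) = [] := List.filter_eq_nil_iff.2 fun x hx => by
        simpa using (hL x hx).trans (by omega : M < m)
      have hRm : R.filter (fun x => m ≤ x) = [] := List.filter_eq_nil_iff.2 fun x hx => by
        simpa using (hR x hx).trans_lt (by omega : M < m)
      simp [hmM, hLm, hRm, ss_nil]

theorem iterate_ss_filter_le (m k : ℕ) (l : List ℕ) :
    ss^[k] (l.filter (fun x => m ≤ x)) = (ss^[k] l).filter (fun x => m ≤ x) :=
  (Function.Commute.iterate_left (f := ss) (ss_filter_le m) k) l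

theorem stmt_5_general (m : ℕ) (π : List ℕ) (k : ℕ) :
    (ss^[k] (π.filter (fun x => m ≤ x))).Sublist (ss^[k] π) := by
  rw [iterate_ss_filter_le]
  exact List.filter_sublist

/-- Corollary 5.4: for `π ∈ Sₙ`, `1 ≤ m ≤ n` and `k ≥ 0`, `s^k(π_{≥ m})` occurs as a
subsequence of `s^k(π)`. -/
theorem stmt_5 (n m : ℕ) (hm : 1 ≤ m) (hmn : m ≤ n) (π : List ℕ)
    (hπ : π.Perm (List.range' 1 n)) (k : ℕ) :
    (ss^[k] (π.filter (fun x => m ≤ x))).Sublist (ss^[k] π) :=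
  stmt_5_general m π k
end
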